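/- Let N = 2, T > 0, and let ξ : [0,T] → ℝ² be Hölder continuous with exponent α > 1/2. Define F(x,t) = ∫₀^t Φ(x-ξ(s), t-s) ds with Φ the two-dimensional heat kernel. Then for each fixed t ∈ (0,T), lim_{x→ξ(t)} F(x,t) / log(1/|x-ξ(t)|) = 1/(2π). -/

import Mathlib

/-!
After the substitution `u = t - s`,
`4π F(x,t) = ∫₀ᵗ u⁻¹ exp (-|x - ξ(t-u)|² / (4u)) du`. Write `r = |x - ξ(t)|`. Hölder continuity
gives `| |x - ξ(t-u)| - r | ≤ L u^α`, so the exponent lies between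
`-r²/(2u) - L² u^(2α-1)/2` and `-r²/(8u) + L² u^(2α-1)/4`. Linearising the exponential in the
Hölder term changes the integrand by `O(u^(2α-2))`, which is integrable at `0` exactly because
`α > 1/2`. What is left is `∫₀ᵗ u⁻¹ exp (-c/u) du = log (t/c) + O(1)` with
`c = r²/8` or `c = r²/2`; the constant in `c` only shifts the logarithm, so
`F(x,t) = (2π)⁻¹ log (1/r) + O(1)` as `x → ξ(t)`.
-/

open MeasureTheory Real Set Metric Filter Topology

noncomputable section

/-- The heat kernel on ℝ². -/
def heatKernel2 (x : EuclideanSpace ℝ (Fin 2)) (t : ℝ) : ℝ :=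
  (4 * π * t)⁻¹ * Real.exp (-‖x‖ ^ 2 / (4 * t))

/-- The time-integrated heat kernel along the curve ξ. -/
def Fsol2 (ξ : ℝ → EuclideanSpace ℝ (Fin 2))
    (x : EuclideanSpace ℝ (Fin 2)) (t : ℝ) : ℝ :=
  ∫ s in (0 : ℝ)..t, heatKernel2 (x - ξ s) (t - s)

lemma exp_add_le_exp_add_mul_exp {x y A : ℝ} (hy : y ≤ 0) (hx : 0 ≤ x) (hxA : x ≤ A) :
    exp (y + x) ≤ exp y + x * exp A := by
  have hexp : exp x ≤ 1 + x * exp x := by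
    have h := mul_le_mul_of_nonneg_right (add_one_le_exp (-x)) (exp_pos x).le
    rw [add_mul, ← exp_add, neg_add_cancel, exp_zero] at h
    linarith
  have hy1 : exp y ≤ 1 := exp_le_one_iff.2 hy
  calc exp (y + x) = exp y * exp x := exp_add y x
    _ ≤ exp y * (1 + x * exp A) := by gcongr; exact hexp.trans (by gcongr)
    _ ≤ exp y + x * exp A := by
        nlinarith [mul_nonneg (mul_nonneg hx (exp_pos A).le) (sub_nonneg.2 hy1)]

lemma exp_neg_sub_le_exp_neg_add {p q : ℝ} (hp : 0 ≤ p) (hq : 0 ≤ q) :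
    exp (-p) - q ≤ exp (-(p + q)) := by
  rw [neg_add, exp_add]
  nlinarith [one_sub_le_exp_neg q, exp_le_one_iff.2 (neg_nonpos.2 hp), exp_pos (-p)]

lemma exp_neg_sq_div_le {u d r a A : ℝ} (hu : 0 < u) (hdr : |d - r| ≤ a)
    (hA : a ^ 2 / (4 * u) ≤ A) :
    exp (-d ^ 2 / (4 * u)) ≤ exp (-(r ^ 2 / 8) / u) + a ^ 2 / (4 * u) * exp A := by
  have hsq : r ^ 2 / 2 - a ^ 2 ≤ d ^ 2 := by
    nlinarith [sq_le_sq' (abs_le.1 hdr).1 (abs_le.1 hdr).2, sq_nonneg (2 * d - r)]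
  calc exp (-d ^ 2 / (4 * u)) ≤ exp (-(r ^ 2 / 8) / u + a ^ 2 / (4 * u)) := by
        gcongr
        rw [show -(r ^ 2 / 8) / u + a ^ 2 / (4 * u) = (-(r ^ 2 / 2) + a ^ 2) / (4 * u) by
          field_simp; ring]
        gcongr
        linarith
    _ ≤ exp (-(r ^ 2 / 8) / u) + a ^ 2 / (4 * u) * exp A :=
        exp_add_le_exp_add_mul_exp (by rw [neg_div]; exact neg_nonpos.2 (by positivity))
          (by positivity) hA

lemma exp_neg_div_sub_le_exp_neg_sq_div {u d r a : ℝ} (hu : 0 < u) (hdr : |d - r| ≤ a) :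
    exp (-(r ^ 2 / 2) / u) - a ^ 2 / (2 * u) ≤ exp (-d ^ 2 / (4 * u)) := by
  have hsq : d ^ 2 ≤ 2 * r ^ 2 + 2 * a ^ 2 := by
    nlinarith [sq_le_sq' (abs_le.1 hdr).1 (abs_le.1 hdr).2, sq_nonneg (d - 2 * r)]
  calc exp (-(r ^ 2 / 2) / u) - a ^ 2 / (2 * u)
      ≤ exp (-((r ^ 2 / 2) / u + a ^ 2 / (2 * u))) := by
        rw [neg_div]; exact exp_neg_sub_le_exp_neg_add (by positivity) (by positivity)
    _ ≤ exp (-d ^ 2 / (4 * u)) := by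
        gcongr
        rw [show (r ^ 2 / 2) / u + a ^ 2 / (2 * u) = (2 * r ^ 2 + 2 * a ^ 2) / (4 * u) by
          field_simp; ring, neg_div, neg_le_neg_iff]
        gcongr

lemma inv_mul_exp_neg_div_le {c u : ℝ} (hc : 0 < c) (hu : 0 < u) :
    u⁻¹ * exp (-c / u) ≤ c⁻¹ := by
  rw [neg_div, exp_neg, ← mul_inv, inv_le_inv₀ (by positivity) hc]
  nlinarith [add_one_le_exp (c / u), mul_div_cancel₀ c hu.ne']

lemma intervalIntegrable_inv_mul_exp_neg_div {c b : ℝ} (hc : 0 < c) (hb : 0 ≤ b) :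
    IntervalIntegrable (fun u => u⁻¹ * exp (-c / u)) volume 0 b := by
  rw [intervalIntegrable_iff_integrableOn_Ioc_of_le hb]
  refine Measure.integrableOn_of_bounded (M := c⁻¹) (by simp) (by fun_prop) ?_
  filter_upwards [ae_restrict_mem measurableSet_Ioc] with u hu
  rw [norm_of_nonneg (by have := hu.1; positivity)]
  exact inv_mul_exp_neg_div_le hc hu.1

lemma continuousOn_inv_mul_exp_neg_div {c a b : ℝ} (ha : 0 < a) (hab : a ≤ b) :
    ContinuousOn (fun u => u⁻¹ * exp (-c / u)) (uIcc a b) := by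
  rw [uIcc_of_le hab]
  have : ∀ u ∈ Icc a b, u ≠ 0 := fun u hu => (ha.trans_le hu.1).ne'
  fun_prop (disch := assumption)

lemma integral_inv_mul_exp_neg_div_le {c b : ℝ} (hc : 0 < c) (hcb : c ≤ b) :
    ∫ u in 0..b, u⁻¹ * exp (-c / u) ≤ log (b / c) + 1 := by
  have hb : 0 < b := hc.trans_le hcb
  rw [← intervalIntegral.integral_add_adjacent_intervals
    (intervalIntegrable_inv_mul_exp_neg_div hc hc.le)
    (continuousOn_inv_mul_exp_neg_div hc hcb).intervalIntegrable]
  have hsmall : ∫ u in 0..c, u⁻¹ * exp (-c / u) ≤ ∫ _ in 0..c, c⁻¹ :=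
    intervalIntegral.integral_mono_on_of_le_Ioo hc.le
      (intervalIntegrable_inv_mul_exp_neg_div hc hc.le) intervalIntegrable_const
      fun u hu => inv_mul_exp_neg_div_le hc hu.1
  have hlarge : ∫ u in c..b, u⁻¹ * exp (-c / u) ≤ ∫ u in c..b, u⁻¹ :=
    intervalIntegral.integral_mono_on hcb
      (continuousOn_inv_mul_exp_neg_div hc hcb).intervalIntegrable
      (intervalIntegral.intervalIntegrable_inv (fun u hu => ?_) continuousOn_id) fun u hu => ?_
  · rw [intervalIntegral.integral_const, smul_eq_mul, sub_zero, mul_inv_cancel₀ hc.ne'] at hsmall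
    rw [integral_inv_of_pos hc hb] at hlarge
    linarith
  · rw [uIcc_of_le hcb] at hu; exact (hc.trans_le hu.1).ne'
  · have hu0 : 0 < u := hc.trans_le hu.1
    exact mul_le_of_le_one_right (inv_nonneg.2 hu0.le)
      (exp_le_one_iff.2 (div_nonpos_of_nonpos_of_nonneg (neg_nonpos.2 hc.le) hu0.le))

lemma log_div_sub_one_le_integral_inv_mul_exp_neg_div {c b : ℝ} (hc : 0 < c) (hcb : c ≤ b) :
    log (b / c) - 1 ≤ ∫ u in 0..b, u⁻¹ * exp (-c / u) := by
  have hb : 0 < b := hc.trans_le hcb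
  have hpos : ∀ u ∈ uIcc c b, 0 < u := fun u hu =>
    hc.trans_le (by rw [uIcc_of_le hcb] at hu; exact hu.1)
  rw [← intervalIntegral.integral_add_adjacent_intervals
    (intervalIntegrable_inv_mul_exp_neg_div hc hc.le)
    (continuousOn_inv_mul_exp_neg_div hc hcb).intervalIntegrable]
  have hsmall : 0 ≤ ∫ u in 0..c, u⁻¹ * exp (-c / u) :=
    intervalIntegral.integral_nonneg hc.le fun u hu => by have := hu.1; positivity
  have hderiv : ∀ u ∈ uIcc c b, HasDerivAt (fun u => log u + c / u) (u⁻¹ - c / u ^ 2) u := by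
    intro u hu
    have h : HasDerivAt (fun u => log u + c * u⁻¹) (u⁻¹ + c * -(u ^ 2)⁻¹) u :=
      (hasDerivAt_log (hpos u hu).ne').add ((hasDerivAt_inv (hpos u hu).ne').const_mul c)
    simpa only [div_eq_mul_inv, mul_neg, ← sub_eq_add_neg] using h
  have hcont : ContinuousOn (fun u => u⁻¹ - c / u ^ 2) (uIcc c b) := by
    have : ∀ u ∈ uIcc c b, u ≠ 0 := fun u hu => (hpos u hu).ne'
    fun_prop (disch := simp_all)
  have hlarge : ∫ u in c..b, (u⁻¹ - c / u ^ 2) ≤ ∫ u in c..b, u⁻¹ * exp (-c / u) := by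
    refine intervalIntegral.integral_mono_on hcb hcont.intervalIntegrable
      (continuousOn_inv_mul_exp_neg_div hc hcb).intervalIntegrable fun u hu => ?_
    have hu0 : 0 < u := hc.trans_le hu.1
    calc u⁻¹ - c / u ^ 2 = u⁻¹ * (1 - c / u) := by field_simp
      _ ≤ u⁻¹ * exp (-c / u) := by
        gcongr; rw [neg_div]; exact one_sub_le_exp_neg _
  rw [intervalIntegral.integral_eq_sub_of_hasDerivAt hderiv hcont.intervalIntegrable,
    div_self hc.ne'] at hlarge
  rw [log_div hb.ne' hc.ne']
  have : 0 ≤ c / b := by positivity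
  linarith

lemma integral_rpow_zero_left {s : ℝ} (hs : -1 < s) (t : ℝ) :
    ∫ u in 0..t, u ^ s = t ^ (s + 1) / (s + 1) := by
  rw [integral_rpow (Or.inl hs), zero_rpow (by linarith : (0 : ℝ) < s + 1).ne', sub_zero]

lemma mul_rpow_sq_div {L u α : ℝ} (hu : 0 < u) :
    (L * u ^ α) ^ 2 / u = L ^ 2 * u ^ (2 * α - 1) := by
  have h2 : (u ^ α) ^ 2 = u ^ (2 * α) := by
    rw [← rpow_natCast, ← rpow_mul hu.le, mul_comm]; norm_num
  rw [rpow_sub_one hu.ne', mul_pow, h2, mul_div_assoc]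

lemma continuousOn_of_norm_sub_le_mul_abs_rpow {E : Type*} [SeminormedAddCommGroup E]
    {f : ℝ → E} {s : Set ℝ} {L α : ℝ} (hα : 0 < α)
    (hf : ∀ a ∈ s, ∀ b ∈ s, ‖f a - f b‖ ≤ L * |a - b| ^ α) : ContinuousOn f s := by
  intro a ha
  rw [ContinuousWithinAt, tendsto_iff_norm_sub_tendsto_zero]
  have hlim : Tendsto (fun b => L * |b - a| ^ α) (𝓝[s] a) (𝓝 0) := by
    have hcont : Continuous fun b : ℝ => L * |b - a| ^ α := by
      have : Continuous fun b : ℝ => |b - a| := by fun_prop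
      exact (this.rpow_const fun _ => Or.inr hα.le).const_mul L
    simpa [zero_rpow hα.ne'] using (hcont.tendsto a).mono_left nhdsWithin_le_nhds
  exact squeeze_zero' (Eventually.of_forall fun _ => norm_nonneg _)
    (eventually_nhdsWithin_of_forall fun b hb => hf b hb a ha) hlim

lemma abs_norm_sub_sub_norm_sub_le {E : Type*} [SeminormedAddCommGroup E] {T α L t u : ℝ}
    {ξ : ℝ → E} (x : E)
    (hHolder : ∀ a ∈ Icc (0 : ℝ) T, ∀ b ∈ Icc (0 : ℝ) T,
      ‖ξ a - ξ b‖ ≤ L * |a - b| ^ α)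
    (htT : t ≤ T) (hu : u ∈ Icc 0 t) :
    |‖x - ξ (t - u)‖ - ‖x - ξ t‖| ≤ L * u ^ α := by
  have hmem : ∀ s ∈ Icc 0 t, s ∈ Icc 0 T := fun s hs => ⟨hs.1, hs.2.trans htT⟩
  calc |‖x - ξ (t - u)‖ - ‖x - ξ t‖| ≤ ‖(x - ξ (t - u)) - (x - ξ t)‖ :=
        abs_norm_sub_norm_le _ _
    _ = ‖ξ t - ξ (t - u)‖ := by rw [sub_sub_sub_cancel_left]
    _ ≤ L * |t - (t - u)| ^ α :=
        hHolder _ (hmem t ⟨hu.1.trans hu.2, le_rfl⟩) _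
          (hmem _ ⟨sub_nonneg.2 hu.2, by linarith [hu.1]⟩)
    _ = L * u ^ α := by rw [sub_sub_cancel, abs_of_nonneg hu.1]

lemma four_pi_mul_heatKernel2 (y : EuclideanSpace ℝ (Fin 2)) (u : ℝ) :
    4 * π * heatKernel2 y u = u⁻¹ * exp (-‖y‖ ^ 2 / (4 * u)) := by
  rw [heatKernel2, mul_inv, mul_assoc (4 * π)⁻¹, mul_inv_cancel_left₀ (by positivity)]

lemma Fsol2_eq_integral (ξ : ℝ → EuclideanSpace ℝ (Fin 2)) (x : EuclideanSpace ℝ (Fin 2))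
    (t : ℝ) :
    Fsol2 ξ x t = ∫ u in 0..t, heatKernel2 (x - ξ (t - u)) u := by
  have h := intervalIntegral.integral_comp_sub_left
    (fun u => heatKernel2 (x - ξ (t - u)) u) t (a := 0) (b := t)
  simpa only [Fsol2, sub_sub_cancel, sub_self, sub_zero] using h

section AlongHolderCurve

variable {T α L t u : ℝ} {ξ : ℝ → EuclideanSpace ℝ (Fin 2)} {x : EuclideanSpace ℝ (Fin 2)}

lemma four_pi_mul_heatKernel2_sub_le (hα : 1 / 2 ≤ α)
    (hHolder : ∀ a ∈ Icc (0 : ℝ) T, ∀ b ∈ Icc (0 : ℝ) T,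
      ‖ξ a - ξ b‖ ≤ L * |a - b| ^ α)
    (htT : t ≤ T) (hu : u ∈ Ioc 0 t) :
    4 * π * heatKernel2 (x - ξ (t - u)) u ≤ u⁻¹ * exp (-(‖x - ξ t‖ ^ 2 / 8) / u)
      + L ^ 2 * exp (L ^ 2 * t ^ (2 * α - 1) / 4) / 4 * u ^ (2 * α - 2) := by
  have hu0 : 0 < u := hu.1
  have hsq : (L * u ^ α) ^ 2 / (4 * u) = L ^ 2 * u ^ (2 * α - 1) / 4 := by
    rw [mul_comm 4 u, ← div_div, mul_rpow_sq_div hu0]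
  have hA : (L * u ^ α) ^ 2 / (4 * u) ≤ L ^ 2 * t ^ (2 * α - 1) / 4 := by
    rw [hsq]; gcongr; exacts [by linarith, hu.2]
  rw [four_pi_mul_heatKernel2]
  calc u⁻¹ * exp (-‖x - ξ (t - u)‖ ^ 2 / (4 * u))
      ≤ u⁻¹ * (exp (-(‖x - ξ t‖ ^ 2 / 8) / u)
          + (L * u ^ α) ^ 2 / (4 * u) * exp (L ^ 2 * t ^ (2 * α - 1) / 4)) :=
        mul_le_mul_of_nonneg_left (exp_neg_sq_div_le hu0
          (abs_norm_sub_sub_norm_sub_le x hHolder htT (Ioc_subset_Icc_self hu)) hA)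
          (inv_nonneg.2 hu0.le)
    _ = _ := by
        rw [hsq, show 2 * α - 2 = 2 * α - 1 - 1 by ring, rpow_sub_one hu0.ne' (2 * α - 1)]
        ring

lemma sub_le_four_pi_mul_heatKernel2_sub
    (hHolder : ∀ a ∈ Icc (0 : ℝ) T, ∀ b ∈ Icc (0 : ℝ) T,
      ‖ξ a - ξ b‖ ≤ L * |a - b| ^ α)
    (htT : t ≤ T) (hu : u ∈ Ioc 0 t) :
    u⁻¹ * exp (-(‖x - ξ t‖ ^ 2 / 2) / u) - L ^ 2 / 2 * u ^ (2 * α - 2)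
      ≤ 4 * π * heatKernel2 (x - ξ (t - u)) u := by
  have hu0 : 0 < u := hu.1
  rw [four_pi_mul_heatKernel2]
  calc u⁻¹ * exp (-(‖x - ξ t‖ ^ 2 / 2) / u) - L ^ 2 / 2 * u ^ (2 * α - 2)
      = u⁻¹ * (exp (-(‖x - ξ t‖ ^ 2 / 2) / u) - (L * u ^ α) ^ 2 / (2 * u)) := by
        rw [mul_comm 2 u, ← div_div, mul_rpow_sq_div hu0,
          show 2 * α - 2 = 2 * α - 1 - 1 by ring, rpow_sub_one hu0.ne' (2 * α - 1)]
        ring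
    _ ≤ u⁻¹ * exp (-‖x - ξ (t - u)‖ ^ 2 / (4 * u)) :=
        mul_le_mul_of_nonneg_left (exp_neg_div_sub_le_exp_neg_sq_div hu0
          (abs_norm_sub_sub_norm_sub_le x hHolder htT (Ioc_subset_Icc_self hu)))
          (inv_nonneg.2 hu0.le)

lemma heatKernel2_nonneg (y : EuclideanSpace ℝ (Fin 2)) {u : ℝ} (hu : 0 ≤ u) :
    0 ≤ heatKernel2 y u := by
  unfold heatKernel2; positivity

lemma intervalIntegrable_heatKernel2_sub (hα : 1 / 2 < α)
    (hHolder : ∀ a ∈ Icc (0 : ℝ) T, ∀ b ∈ Icc (0 : ℝ) T,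
      ‖ξ a - ξ b‖ ≤ L * |a - b| ^ α)
    (ht : 0 ≤ t) (htT : t ≤ T) (hx : x ≠ ξ t) :
    IntervalIntegrable (fun u => heatKernel2 (x - ξ (t - u)) u) volume 0 t := by
  have hc : 0 < ‖x - ξ t‖ ^ 2 / 8 := by
    have := norm_pos_iff.2 (sub_ne_zero.2 hx); positivity
  have hξ : ContinuousOn (fun u => ξ (t - u)) (Ioc 0 t) :=
    (continuousOn_of_norm_sub_le_mul_abs_rpow (by linarith) hHolder).comp (by fun_prop)
      fun u hu => ⟨by linarith [hu.2], by linarith [hu.1]⟩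
  have hcont : ContinuousOn (fun u => heatKernel2 (x - ξ (t - u)) u) (Ioc 0 t) := by
    have h4u : ∀ u ∈ Ioc (0 : ℝ) t, 4 * u ≠ 0 := fun u hu => by have := hu.1; positivity
    exact ((continuousOn_const.mul continuousOn_id).inv₀ fun u hu =>
        mul_ne_zero (by positivity) hu.1.ne').mul
      (continuous_exp.comp_continuousOn
        (((continuousOn_const.sub hξ).norm.pow 2).neg.div
          (continuousOn_const.mul continuousOn_id) h4u))
  refine (((intervalIntegrable_inv_mul_exp_neg_div hc ht).add
    ((intervalIntegral.intervalIntegrable_rpow' (by linarith : -1 < 2 * α - 2)).const_mul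
      (L ^ 2 * exp (L ^ 2 * t ^ (2 * α - 1) / 4) / 4))).const_mul (4 * π)⁻¹).mono_fun' ?_ ?_
  · rw [uIoc_of_le ht]; exact hcont.aestronglyMeasurable measurableSet_Ioc
  · rw [uIoc_of_le ht]
    filter_upwards [ae_restrict_mem measurableSet_Ioc] with u hu
    rw [norm_of_nonneg (heatKernel2_nonneg _ hu.1.le), le_inv_mul_iff₀ (by positivity)]
    exact four_pi_mul_heatKernel2_sub_le hα.le hHolder htT hu

lemma four_pi_mul_Fsol2_le (hα : 1 / 2 < α)
    (hHolder : ∀ a ∈ Icc (0 : ℝ) T, ∀ b ∈ Icc (0 : ℝ) T,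
      ‖ξ a - ξ b‖ ≤ L * |a - b| ^ α)
    (htT : t ≤ T) (hx : x ≠ ξ t) (hxt : ‖x - ξ t‖ ^ 2 / 8 ≤ t) :
    4 * π * Fsol2 ξ x t ≤ log (t / (‖x - ξ t‖ ^ 2 / 8)) + 1
      + L ^ 2 * exp (L ^ 2 * t ^ (2 * α - 1) / 4) / 4 * (t ^ (2 * α - 1) / (2 * α - 1)) := by
  set c := ‖x - ξ t‖ ^ 2 / 8
  set K := L ^ 2 * exp (L ^ 2 * t ^ (2 * α - 1) / 4) / 4
  have hc : 0 < c := by have := norm_pos_iff.2 (sub_ne_zero.2 hx); positivity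
  have ht : 0 ≤ t := hc.le.trans hxt
  have hJ := intervalIntegrable_inv_mul_exp_neg_div hc ht
  have hR := (intervalIntegral.intervalIntegrable_rpow' (a := 0) (b := t)
    (by linarith : -1 < 2 * α - 2)).const_mul K
  rw [Fsol2_eq_integral, ← intervalIntegral.integral_const_mul]
  calc ∫ u in 0..t, 4 * π * heatKernel2 (x - ξ (t - u)) u
      ≤ ∫ u in 0..t, (u⁻¹ * exp (-c / u) + K * u ^ (2 * α - 2)) :=
        intervalIntegral.integral_mono_on_of_le_Ioo ht
          ((intervalIntegrable_heatKernel2_sub hα hHolder ht htT hx).const_mul _) (hJ.add hR)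
          fun u hu => four_pi_mul_heatKernel2_sub_le hα.le hHolder htT ⟨hu.1, hu.2.le⟩
    _ = (∫ u in 0..t, u⁻¹ * exp (-c / u)) + K * (t ^ (2 * α - 1) / (2 * α - 1)) := by
        rw [intervalIntegral.integral_add hJ hR, intervalIntegral.integral_const_mul,
          integral_rpow_zero_left (by linarith), show 2 * α - 2 + 1 = 2 * α - 1 by ring]
    _ ≤ _ := by gcongr; exact integral_inv_mul_exp_neg_div_le hc hxt

lemma le_four_pi_mul_Fsol2 (hα : 1 / 2 < α)
    (hHolder : ∀ a ∈ Icc (0 : ℝ) T, ∀ b ∈ Icc (0 : ℝ) T,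
      ‖ξ a - ξ b‖ ≤ L * |a - b| ^ α)
    (htT : t ≤ T) (hx : x ≠ ξ t) (hxt : ‖x - ξ t‖ ^ 2 / 2 ≤ t) :
    log (t / (‖x - ξ t‖ ^ 2 / 2)) - 1 - L ^ 2 / 2 * (t ^ (2 * α - 1) / (2 * α - 1))
      ≤ 4 * π * Fsol2 ξ x t := by
  set c := ‖x - ξ t‖ ^ 2 / 2
  have hc : 0 < c := by have := norm_pos_iff.2 (sub_ne_zero.2 hx); positivity
  have ht : 0 ≤ t := hc.le.trans hxt
  have hJ := intervalIntegrable_inv_mul_exp_neg_div hc ht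
  have hR := (intervalIntegral.intervalIntegrable_rpow' (a := 0) (b := t)
    (by linarith : -1 < 2 * α - 2)).const_mul (L ^ 2 / 2)
  rw [Fsol2_eq_integral, ← intervalIntegral.integral_const_mul]
  calc _ ≤ (∫ u in 0..t, u⁻¹ * exp (-c / u))
          - L ^ 2 / 2 * (t ^ (2 * α - 1) / (2 * α - 1)) := by
        gcongr; exact log_div_sub_one_le_integral_inv_mul_exp_neg_div hc hxt
    _ = ∫ u in 0..t, (u⁻¹ * exp (-c / u) - L ^ 2 / 2 * u ^ (2 * α - 2)) := by
        rw [intervalIntegral.integral_sub hJ hR, intervalIntegral.integral_const_mul,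
          integral_rpow_zero_left (by linarith), show 2 * α - 2 + 1 = 2 * α - 1 by ring]
    _ ≤ ∫ u in 0..t, 4 * π * heatKernel2 (x - ξ (t - u)) u :=
        intervalIntegral.integral_mono_on_of_le_Ioo ht (hJ.sub hR)
          ((intervalIntegrable_heatKernel2_sub hα hHolder ht htT hx).const_mul _)
          fun u hu => sub_le_four_pi_mul_heatKernel2_sub hHolder htT ⟨hu.1, hu.2.le⟩

lemma exists_bounds_Fsol2_sub_log (hα : 1 / 2 < α)
    (hHolder : ∀ a ∈ Icc (0 : ℝ) T, ∀ b ∈ Icc (0 : ℝ) T,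
      ‖ξ a - ξ b‖ ≤ L * |a - b| ^ α)
    (htT : t ≤ T) :
    ∃ A B : ℝ, ∀ x, x ≠ ξ t → ‖x - ξ t‖ ^ 2 ≤ 2 * t →
      Fsol2 ξ x t - 1 / (2 * π) * log (1 / ‖x - ξ t‖) ∈ Icc A B := by
  refine ⟨(log (2 * t) - 1 - L ^ 2 / 2 * (t ^ (2 * α - 1) / (2 * α - 1))) / (4 * π),
    (log (8 * t) + 1 + L ^ 2 * exp (L ^ 2 * t ^ (2 * α - 1) / 4) / 4
      * (t ^ (2 * α - 1) / (2 * α - 1))) / (4 * π), fun x hx hxt => ?_⟩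
  have hr : 0 < ‖x - ξ t‖ := norm_pos_iff.2 (sub_ne_zero.2 hx)
  have ht : 0 < t := by linarith [pow_pos hr 2]
  have hlog : ∀ k : ℝ, 0 < k →
      log (t / (‖x - ξ t‖ ^ 2 / k)) = log (k * t) + 2 * log (1 / ‖x - ξ t‖) := by
    intro k hk
    rw [div_div_eq_mul_div, mul_comm t, log_div (by positivity) (by positivity), log_pow,
      one_div, log_inv]
    ring
  have hup := four_pi_mul_Fsol2_le hα hHolder htT hx (by linarith)
  have hlo := le_four_pi_mul_Fsol2 hα hHolder htT hx (by linarith)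
  rw [hlog 8 (by norm_num)] at hup
  rw [hlog 2 (by norm_num)] at hlo
  have hF : Fsol2 ξ x t - 1 / (2 * π) * log (1 / ‖x - ξ t‖)
      = (4 * π * Fsol2 ξ x t - 2 * log (1 / ‖x - ξ t‖)) / (4 * π) := by
    field_simp; ring
  rw [hF]
  constructor <;> exact div_le_div_of_nonneg_right (by linarith) (by positivity)

end AlongHolderCurve

lemma tendsto_div_of_sub_mul_mem_Icc {β : Type*} {l : Filter β} {F g : β → ℝ} {c A B : ℝ}
    (hg : Tendsto g l atTop) (hF : ∀ᶠ x in l, F x - c * g x ∈ Icc A B) :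
    Tendsto (fun x => F x / g x) l (𝓝 c) := by
  have hlim : ∀ C, Tendsto (fun x => c + C / g x) l (𝓝 c) := fun C => by
    simpa using tendsto_const_nhds.add (tendsto_const_nhds.div_atTop hg)
  refine tendsto_of_tendsto_of_tendsto_of_le_of_le' (hlim A) (hlim B) ?_ ?_ <;>
  filter_upwards [hF, hg.eventually_gt_atTop 0] with x hx hgx <;>
  rw [add_div' _ _ _ hgx.ne']
  · exact div_le_div_of_nonneg_right (by linarith [hx.1]) hgx.le
  · exact div_le_div_of_nonneg_right (by linarith [hx.2]) hgx.le

theorem Fsol2_asymptotics_general (T α L : ℝ) (hα : 1 / 2 < α)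
    (ξ : ℝ → EuclideanSpace ℝ (Fin 2))
    (hHolder : ∀ a ∈ Icc (0 : ℝ) T, ∀ b ∈ Icc (0 : ℝ) T, ‖ξ a - ξ b‖ ≤ L * |a - b| ^ α)
    (t : ℝ) (ht : t ∈ Ioo (0 : ℝ) T) :
    Tendsto (fun x : EuclideanSpace ℝ (Fin 2) =>
        Fsol2 ξ x t / Real.log (1 / ‖x - ξ t‖))
      (nhdsWithin (ξ t) {x | x ≠ ξ t}) (nhds (1 / (2 * π))) := by
  obtain ⟨A, B, hAB⟩ := exists_bounds_Fsol2_sub_log hα hHolder ht.2.le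
  have hr := tendsto_norm_sub_self_nhdsNE (ξ t)
  have hsmall : ∀ᶠ x in 𝓝[≠] (ξ t), ‖x - ξ t‖ ^ 2 < 2 * t :=
    ((hr.mono_right nhdsWithin_le_nhds).pow 2).eventually_lt_const (by simpa using ht.1)
  have hlog : Tendsto (fun x => log (1 / ‖x - ξ t‖)) (𝓝[≠] (ξ t)) atTop := by
    simpa only [one_div, Function.comp_def, Pi.inv_apply]
      using tendsto_log_atTop.comp hr.inv_tendsto_nhdsGT_zero
  exact tendsto_div_of_sub_mul_mem_Icc hlog <| by
    filter_upwards [self_mem_nhdsWithin, hsmall] with x hx hxt using hAB x hx hxt.le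

/-- Proposition 4.5: for N = 2 and ξ Hölder with exponent α > 1/2,
F(x,t) ~ (1/(2π)) log(1/|x-ξ(t)|) as x → ξ(t). -/
theorem Fsol2_asymptotics (T α L : ℝ) (hT : 0 < T) (hα : 1 / 2 < α) (hL : 0 < L)
    (ξ : ℝ → EuclideanSpace ℝ (Fin 2))
    (hHolder : ∀ a ∈ Icc (0 : ℝ) T, ∀ b ∈ Icc (0 : ℝ) T, ‖ξ a - ξ b‖ ≤ L * |a - b| ^ α)
    (t : ℝ) (ht : t ∈ Ioo (0 : ℝ) T) :
    Tendsto (fun x : EuclideanSpace ℝ (Fin 2) =>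
        Fsol2 ξ x t / Real.log (1 / ‖x - ξ t‖))
      (nhdsWithin (ξ t) {x | x ≠ ξ t}) (nhds (1 / (2 * π))) :=
  Fsol2_asymptotics_general T α L hα ξ hHolder t ht
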